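/- arXiv:1903.09463 — 6 statements merged into one kernel-verified Lean document; each statement's English description precedes it below -/
import Mathlib

section
/- Let A and B be Archimedean Riesz spaces with strong units u ∈ A and v ∈ B, and let f : A → B be a Riesz homomorphism with f(u) = v. If A is a complete metric space with respect to the metric d(a,a') = ‖a − a'‖_u and the image of f is dense in B with respect to the metric induced by ‖·‖_v, then f is surjective. -/
/-- The unit norm `‖a‖_u = inf { r : ℝ | 0 ≤ r ∧ |a| ≤ r • u }` on a Riesz space with
strong unit `u`. -/
noncomputable def unitNorm {A : Type*} [AddCommGroup A] [Lattice A] [SMul ℝ A]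
    (u a : A) : ℝ :=
  sInf {r : ℝ | 0 ≤ r ∧ |a| ≤ r • u}

section Helpers

variable {A : Type*} [AddCommGroup A] [Lattice A]
  [CovariantClass A A (· + ·) (· ≤ ·)] [Module ℝ A]

private lemma rsmul_mono (hsmul : ∀ (r : ℝ) (a : A), 0 ≤ r → 0 ≤ a → 0 ≤ r • a)
    {r : ℝ} (hr : 0 ≤ r) {x y : A} (h : x ≤ y) : r • x ≤ r • y := by
  have h0 : 0 ≤ r • (y - x) := hsmul r (y - x) hr (sub_nonneg.mpr h)
  rw [smul_sub] at h0
  exact sub_nonneg.mp h0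

private lemma rsmul_mono_left (hsmul : ∀ (r : ℝ) (a : A), 0 ≤ r → 0 ≤ a → 0 ≤ r • a)
    {r s : ℝ} (h : r ≤ s) {x : A} (hx : 0 ≤ x) : r • x ≤ s • x := by
  have h0 : 0 ≤ (s - r) • x := hsmul _ _ (sub_nonneg.mpr h) hx
  rw [sub_smul] at h0
  exact sub_nonneg.mp h0

private lemma unitNorm_set_nonempty (u : A) (hu : ∀ a : A, ∃ n : ℕ, |a| ≤ n • u) (a : A) :
    Set.Nonempty {r : ℝ | 0 ≤ r ∧ |a| ≤ r • u} := by
  obtain ⟨n, hn⟩ := hu a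
  exact ⟨n, n.cast_nonneg, by rwa [Nat.cast_smul_eq_nsmul]⟩

private lemma unitNorm_nonneg (u : A) (hu : ∀ a : A, ∃ n : ℕ, |a| ≤ n • u) (a : A) :
    0 ≤ unitNorm u a :=
  le_csInf (unitNorm_set_nonempty u hu a) fun _ hr => hr.1

private lemma unitNorm_le (u : A) {a : A} {r : ℝ} (hr : 0 ≤ r) (h : |a| ≤ r • u) :
    unitNorm u a ≤ r :=
  csInf_le ⟨0, fun _ hs => hs.1⟩ ⟨hr, h⟩

private lemma unitNorm_zero (u : A) (hu0 : 0 ≤ u) : unitNorm u (0 : A) ≤ 0 :=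
  unitNorm_le u le_rfl (by simpa using le_rfl)

private lemma unitNorm_neg (u : A) (a : A) : unitNorm u (-a) = unitNorm u a := by
  unfold unitNorm
  rw [abs_neg]

/-- Key Archimedean fact: the infimum in the unit norm is attained. -/
private lemma abs_le_unitNorm_smul
    (hsmul : ∀ (r : ℝ) (a : A), 0 ≤ r → 0 ≤ a → 0 ≤ r • a)
    (u : A) (hu0 : 0 ≤ u) (hu : ∀ a : A, ∃ n : ℕ, |a| ≤ n • u)
    (hArch : ∀ a : A, (∃ b : A, ∀ n : ℕ, n • |a| ≤ |b|) → a = 0)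
    (a : A) : |a| ≤ unitNorm u a • u := by
  have hr0 : 0 ≤ unitNorm u a := unitNorm_nonneg u hu a
  have hstep : ∀ ε : ℝ, 0 < ε → |a| ≤ (unitNorm u a + ε) • u := by
    intro ε hε
    obtain ⟨s, hs, hslt⟩ := (csInf_lt_iff ⟨0, fun _ hs => hs.1⟩
      (unitNorm_set_nonempty u hu a)).mp (by linarith : unitNorm u a < unitNorm u a + ε)
    exact hs.2.trans (rsmul_mono_left hsmul hslt.le hu0)
  have hc0 : (0:A) ≤ (|a| - unitNorm u a • u) ⊔ 0 := le_sup_right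
  have hcle : ∀ n : ℕ, n • |(|a| - unitNorm u a • u) ⊔ 0| ≤ |u| := by
    intro n
    rw [abs_of_nonneg hc0, abs_of_nonneg hu0, ← Nat.cast_smul_eq_nsmul ℝ]
    rcases Nat.eq_zero_or_pos n with h0 | hpos
    · simpa [h0] using hu0
    · have hn : (0:ℝ) < n := by exact_mod_cast hpos
      have h1 : |a| ≤ (unitNorm u a + 1 / n) • u := hstep _ (by positivity)
      rw [add_smul] at h1
      have h2 : |a| - unitNorm u a • u ≤ (1 / n : ℝ) • u := by
        rw [sub_le_iff_le_add, add_comm]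
        exact h1
      have h3 : (|a| - unitNorm u a • u) ⊔ 0 ≤ (1 / n : ℝ) • u :=
        sup_le h2 (hsmul _ _ (by positivity) hu0)
      calc (n : ℝ) • ((|a| - unitNorm u a • u) ⊔ 0)
          ≤ (n : ℝ) • ((1 / n : ℝ) • u) := rsmul_mono hsmul (by positivity) h3
        _ = u := by rw [smul_smul, mul_one_div_cancel (ne_of_gt hn), one_smul]
  have hczero : (|a| - unitNorm u a • u) ⊔ 0 = 0 := hArch _ ⟨u, hcle⟩
  have h4 : |a| - unitNorm u a • u ≤ 0 := le_sup_left.trans_eq hczero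
  exact sub_nonpos.mp h4

private lemma myAbsAdd (a b : A) : |a + b| ≤ |a| + |b| :=
  sup_le (add_le_add (le_abs_self a) (le_abs_self b))
    (by rw [neg_add]; exact add_le_add (neg_le_abs a) (neg_le_abs b))

private lemma unitNorm_add_le
    (hsmul : ∀ (r : ℝ) (a : A), 0 ≤ r → 0 ≤ a → 0 ≤ r • a)
    (u : A) (hu0 : 0 ≤ u) (hu : ∀ a : A, ∃ n : ℕ, |a| ≤ n • u)
    (hArch : ∀ a : A, (∃ b : A, ∀ n : ℕ, n • |a| ≤ |b|) → a = 0)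
    (a b : A) : unitNorm u (a + b) ≤ unitNorm u a + unitNorm u b := by
  apply unitNorm_le u (add_nonneg (unitNorm_nonneg u hu a) (unitNorm_nonneg u hu b))
  calc |a + b| ≤ |a| + |b| := myAbsAdd a b
    _ ≤ unitNorm u a • u + unitNorm u b • u :=
        add_le_add (abs_le_unitNorm_smul hsmul u hu0 hu hArch a)
          (abs_le_unitNorm_smul hsmul u hu0 hu hArch b)
    _ = (unitNorm u a + unitNorm u b) • u := (add_smul _ _ _).symm

private lemma eq_of_unitNorm_lt
    (hsmul : ∀ (r : ℝ) (a : A), 0 ≤ r → 0 ≤ a → 0 ≤ r • a)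
    (u : A) (hu0 : 0 ≤ u) (hu : ∀ a : A, ∃ n : ℕ, |a| ≤ n • u)
    (hArch : ∀ a : A, (∃ b : A, ∀ n : ℕ, n • |a| ≤ |b|) → a = 0)
    {x y : A} (h : ∀ ε : ℝ, 0 < ε → unitNorm u (x - y) < ε) : x = y := by
  have h0 : unitNorm u (x - y) = 0 := by
    refine le_antisymm ?_ (unitNorm_nonneg u hu _)
    by_contra hlt
    push_neg at hlt
    exact lt_irrefl _ (h _ hlt)
  have habs : |x - y| ≤ (0:ℝ) • u := h0 ▸ abs_le_unitNorm_smul hsmul u hu0 hu hArch (x - y)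
  rw [zero_smul] at habs
  have h2 : x - y ≤ 0 := (le_sup_left : x - y ≤ (x - y) ⊔ -(x - y)).trans habs
  have h3 : -(x - y) ≤ 0 := (le_sup_right : -(x - y) ≤ (x - y) ⊔ -(x - y)).trans habs
  have : x - y = 0 := le_antisymm h2 (by simpa using h3)
  exact sub_eq_zero.mp this

end Helpers

/-- Let `f : A → B` be a unital Riesz homomorphism between Archimedean
Riesz spaces with strong units `u`, `v`.  If `A` is complete for the metric
`d(a,a') = ‖a - a'‖_u` (expressed via Cauchy sequences) and the image of `f` is dense in
`B` for the metric induced by `‖·‖_v`, then `f` is surjective. -/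
theorem unital_riesz_hom_surjective_of_complete_of_denseRange
    (A B : Type*)
    [AddCommGroup A] [Lattice A] [CovariantClass A A (· + ·) (· ≤ ·)] [Module ℝ A]
    [AddCommGroup B] [Lattice B] [CovariantClass B B (· + ·) (· ≤ ·)] [Module ℝ B]
    (hsmulA : ∀ (r : ℝ) (a : A), 0 ≤ r → 0 ≤ a → 0 ≤ r • a)
    (hsmulB : ∀ (r : ℝ) (b : B), 0 ≤ r → 0 ≤ b → 0 ≤ r • b)
    (u : A) (hu0 : 0 ≤ u) (hu : ∀ a : A, ∃ n : ℕ, |a| ≤ n • u)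
    (v : B) (hv0 : 0 ≤ v) (hv : ∀ b : B, ∃ n : ℕ, |b| ≤ n • v)
    (hArchA : ∀ a : A, (∃ b : A, ∀ n : ℕ, n • |a| ≤ |b|) → a = 0)
    (hArchB : ∀ b : B, (∃ c : B, ∀ n : ℕ, n • |b| ≤ |c|) → b = 0)
    (f : A →ₗ[ℝ] B) (hsup : ∀ a b : A, f (a ⊔ b) = f a ⊔ f b) (hfu : f u = v)
    (hcomplete : ∀ a : ℕ → A,
      (∀ ε : ℝ, 0 < ε → ∃ N : ℕ, ∀ m n : ℕ, N ≤ m → N ≤ n →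
        unitNorm u (a m - a n) < ε) →
      ∃ l : A, ∀ ε : ℝ, 0 < ε → ∃ N : ℕ, ∀ n : ℕ, N ≤ n →
        unitNorm u (a n - l) < ε)
    (hdense : ∀ b : B, ∀ ε : ℝ, 0 < ε → ∃ a : A, unitNorm v (f a - b) < ε) :
    Function.Surjective f := by
  -- basic facts about f
  have hfmono : ∀ {x y : A}, x ≤ y → f x ≤ f y := by
    intro x y h
    have h1 := hsup x y
    rw [sup_eq_right.mpr h] at h1
    rw [h1]
    exact le_sup_left
  have hfabs : ∀ x : A, |f x| = f |x| := by
    intro x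
    have h1 : f (x ⊔ -x) = f x ⊔ f (-x) := hsup x (-x)
    rw [map_neg] at h1
    exact h1.symm
  have hinf : ∀ x y : A, f (x ⊓ y) = f x ⊓ f y := by
    intro x y
    calc f (x ⊓ y) = - f ((-x) ⊔ (-y)) := by
          rw [← map_neg, neg_sup, neg_neg, neg_neg]
      _ = f x ⊓ f y := by rw [hsup, map_neg, map_neg, neg_sup, neg_neg, neg_neg]
  have hcontr : ∀ x : A, unitNorm v (f x) ≤ unitNorm u x := by
    intro x
    apply unitNorm_le v (unitNorm_nonneg u hu x)
    rw [hfabs]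
    calc f |x| ≤ f (unitNorm u x • u) :=
          hfmono (abs_le_unitNorm_smul hsmulA u hu0 hu hArchA x)
      _ = unitNorm u x • v := by rw [map_smul, hfu]
  intro b
  -- the inductive step of the approximation
  have step : ∀ (n : ℕ) (x : A), unitNorm v (f x - b) < (1/2:ℝ)^(n+1) →
      ∃ y : A, unitNorm v (f y - b) < (1/2:ℝ)^(n+2) ∧ unitNorm u (y - x) ≤ (1/2:ℝ)^n := by
    intro n x hx
    obtain ⟨c, hc⟩ := hdense (b - f x) ((1/2:ℝ)^(n+2)) (by positivity)
    have h2 : unitNorm v (b - f x) = unitNorm v (f x - b) := by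
      rw [← unitNorm_neg v, neg_sub]
    have hfc : unitNorm v (f c) < (1/2:ℝ)^n := by
      have h1 : unitNorm v (f c) ≤
          unitNorm v (f c - (b - f x)) + unitNorm v (b - f x) := by
        have h3 := unitNorm_add_le hsmulB v hv0 hv hArchB (f c - (b - f x)) (b - f x)
        simpa using h3
      have h4 : unitNorm v (f c) < (1/2:ℝ)^(n+2) + (1/2:ℝ)^(n+1) :=
        lt_of_le_of_lt h1 (add_lt_add hc (h2 ▸ hx))
      have hp : (0:ℝ) < (1/2:ℝ)^n := by positivity
      have h5 : (1/2:ℝ)^(n+2) + (1/2:ℝ)^(n+1) < (1/2:ℝ)^n := by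
        have e1 : (1/2:ℝ)^(n+2) = (1/2:ℝ)^n * (1/4) := by rw [pow_add]; norm_num
        have e2 : (1/2:ℝ)^(n+1) = (1/2:ℝ)^n * (1/2) := by rw [pow_add]; norm_num
        rw [e1, e2]
        linarith
      exact h4.trans h5
    have habs : |f c| ≤ ((1/2:ℝ)^n) • v :=
      (abs_le_unitNorm_smul hsmulB v hv0 hv hArchB (f c)).trans
        (rsmul_mono_left hsmulB hfc.le hv0)
    have ht0 : (0:A) ≤ ((1/2:ℝ)^n) • u := hsmulA _ _ (by positivity) hu0
    refine ⟨x + ((c ⊓ ((1/2:ℝ)^n) • u) ⊔ (-(((1/2:ℝ)^n) • u))), ?_, ?_⟩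
    · have hfc' : f ((c ⊓ ((1/2:ℝ)^n) • u) ⊔ (-(((1/2:ℝ)^n) • u))) = f c := by
        rw [hsup, hinf, map_neg, map_smul, hfu]
        have h5 : f c ≤ ((1/2:ℝ)^n) • v := (le_abs_self _).trans habs
        have h6 : -(((1/2:ℝ)^n) • v) ≤ f c := neg_le.mp ((neg_le_abs _).trans habs)
        rw [inf_eq_left.mpr h5, sup_eq_left.mpr h6]
      have heq : f (x + ((c ⊓ ((1/2:ℝ)^n) • u) ⊔ (-(((1/2:ℝ)^n) • u)))) - b
          = f c - (b - f x) := by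
        rw [map_add, hfc']
        abel
      rw [heq]
      exact hc
    · have heq : x + ((c ⊓ ((1/2:ℝ)^n) • u) ⊔ (-(((1/2:ℝ)^n) • u))) - x
          = (c ⊓ ((1/2:ℝ)^n) • u) ⊔ (-(((1/2:ℝ)^n) • u)) := by abel
      rw [heq]
      apply unitNorm_le u (by positivity)
      have h7 : (c ⊓ ((1/2:ℝ)^n) • u) ⊔ (-(((1/2:ℝ)^n) • u)) ≤ ((1/2:ℝ)^n) • u :=
        sup_le inf_le_right ((neg_nonpos.mpr ht0).trans ht0)
      have h8 : -(((1/2:ℝ)^n) • u) ≤ (c ⊓ ((1/2:ℝ)^n) • u) ⊔ (-(((1/2:ℝ)^n) • u)) :=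
        le_sup_right
      have h9 : -((c ⊓ ((1/2:ℝ)^n) • u) ⊔ (-(((1/2:ℝ)^n) • u))) ≤ ((1/2:ℝ)^n) • u :=
        neg_le.mpr h8
      exact sup_le h7 h9
  choose g hg1 hg2 using step
  obtain ⟨a0, ha0⟩ := hdense b ((1/2:ℝ)^(0+1)) (by positivity)
  let seq : ∀ n : ℕ, {x : A // unitNorm v (f x - b) < (1/2:ℝ)^(n+1)} := fun n =>
    Nat.rec (motive := fun n => {x : A // unitNorm v (f x - b) < (1/2:ℝ)^(n+1)})
      ⟨a0, ha0⟩ (fun k p => ⟨g k p.1 p.2, hg1 k p.1 p.2⟩) n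
  let a : ℕ → A := fun n => (seq n).1
  have hainv : ∀ n, unitNorm v (f (a n) - b) < (1/2:ℝ)^(n+1) := fun n => (seq n).2
  have hastep : ∀ n, unitNorm u (a (n+1) - a n) ≤ (1/2:ℝ)^n := fun n =>
    hg2 n (seq n).1 (seq n).2
  -- the sequence is Cauchy
  have hdiff : ∀ k m : ℕ, unitNorm u (a (m + k) - a m)
      ≤ 2*(1/2:ℝ)^m - 2*(1/2:ℝ)^(m+k) := by
    intro k
    induction k with
    | zero =>
        intro m
        simpa using unitNorm_zero u hu0
    | succ k ih =>
        intro m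
        have h1 := unitNorm_add_le hsmulA u hu0 hu hArchA
          (a (m+k+1) - a (m+k)) (a (m+k) - a m)
        have h2 : a (m+k+1) - a (m+k) + (a (m+k) - a m) = a (m+(k+1)) - a m := by
          abel_nf
        rw [h2] at h1
        calc unitNorm u (a (m + (k+1)) - a m)
            ≤ unitNorm u (a (m+k+1) - a (m+k)) + unitNorm u (a (m+k) - a m) := h1
          _ ≤ (1/2:ℝ)^(m+k) + (2*(1/2:ℝ)^m - 2*(1/2:ℝ)^(m+k)) :=
              add_le_add (hastep _) (ih m)
          _ = 2*(1/2:ℝ)^m - 2*(1/2:ℝ)^(m+(k+1)) := by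
              have hidx : m + (k+1) = (m+k)+1 := by omega
              rw [hidx, pow_succ]
              ring
  have hcauchy : ∀ ε : ℝ, 0 < ε → ∃ N : ℕ, ∀ m n : ℕ, N ≤ m → N ≤ n →
      unitNorm u (a m - a n) < ε := by
    intro ε hε
    obtain ⟨N, hN⟩ := exists_pow_lt_of_lt_one (show (0:ℝ) < ε/2 by linarith)
      (by norm_num : (1/2:ℝ) < 1)
    refine ⟨N, ?_⟩
    have key : ∀ m n : ℕ, N ≤ m → m ≤ n → unitNorm u (a n - a m) < ε := by
      intro m n hm hmn
      obtain ⟨k, rfl⟩ := Nat.exists_eq_add_of_le hmn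
      have h1 := hdiff k m
      have hpow : (1/2:ℝ)^m ≤ (1/2:ℝ)^N :=
        pow_le_pow_of_le_one (by norm_num) (by norm_num) hm
      have hpos : (0:ℝ) < (1/2:ℝ)^(m+k) := by positivity
      calc unitNorm u (a (m+k) - a m) ≤ 2*(1/2:ℝ)^m - 2*(1/2:ℝ)^(m+k) := h1
        _ < 2*(1/2:ℝ)^N := by linarith
        _ < ε := by linarith
    intro m n hm hn
    rcases le_total m n with h | h
    · rw [show a m - a n = -(a n - a m) by abel, unitNorm_neg]
      exact key m n hm h
    · exact key n m hn h
  obtain ⟨l, hl⟩ := hcomplete a hcauchy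
  refine ⟨l, ?_⟩
  apply eq_of_unitNorm_lt hsmulB v hv0 hv hArchB
  intro ε hε
  obtain ⟨N1, hN1⟩ := hl (ε/2) (by linarith)
  obtain ⟨N2, hN2⟩ := exists_pow_lt_of_lt_one (show (0:ℝ) < ε/2 by linarith)
    (by norm_num : (1/2:ℝ) < 1)
  set n := max N1 N2 with hn
  have h1 : unitNorm u (a n - l) < ε/2 := hN1 n (le_max_left _ _)
  have h2 : unitNorm v (f (a n) - b) < ε/2 := by
    have hp1 : (1/2:ℝ)^(n+1) ≤ (1/2:ℝ)^N2 :=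
      pow_le_pow_of_le_one (by norm_num) (by norm_num)
        ((le_max_right N1 N2).trans (Nat.le_succ n))
    exact lt_of_lt_of_le (lt_of_lt_of_le (hainv n) hp1) hN2.le
  have h3 : unitNorm v (f l - b) ≤
      unitNorm v (f l - f (a n)) + unitNorm v (f (a n) - b) := by
    have h4 := unitNorm_add_le hsmulB v hv0 hv hArchB (f l - f (a n)) (f (a n) - b)
    simpa using h4
  have h5 : unitNorm v (f l - f (a n)) ≤ unitNorm u (l - a n) := by
    rw [← map_sub]
    exact hcontr _
  have h6 : unitNorm u (l - a n) = unitNorm u (a n - l) := by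
    rw [show l - a n = -(a n - l) by abel, unitNorm_neg]
  linarith
end

section
/- Let r ≤ s be real numbers and let p, q ∈ ℝ[X] be polynomials. Then there exists a (possibly empty) finite strictly increasing sequence x₁ < x₂ < ⋯ < x_n of points in [r,s] such that, setting x₀ = r and x_{n+1} = s, for each i ∈ {0,…,n} there is a polynomial q_i ∈ ℝ[X] with max(p(x), q(x)) = q_i(x) for all x ∈ [x_i, x_{i+1}]. -/
/-- If a continuous function has no zero in the open interval, it has constant sign
on the closed interval. -/
lemma aux_sign_const {f : ℝ → ℝ} (hf : Continuous f) (a b : ℝ)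
    (h : ∀ c ∈ Set.Ioo a b, f c ≠ 0) :
    (∀ y ∈ Set.Icc a b, 0 ≤ f y) ∨ (∀ y ∈ Set.Icc a b, f y ≤ 0) := by
  rcases le_or_gt b a with hba | hab
  · by_cases h0 : 0 ≤ f a
    · left
      intro y hy
      have : y = a := le_antisymm (hy.2.trans hba) hy.1
      rwa [this]
    · right
      intro y hy
      have : y = a := le_antisymm (hy.2.trans hba) hy.1
      rw [this]; linarith
  · set m := (a + b) / 2 with hm
    have hmI : m ∈ Set.Ioo a b := ⟨by simp [hm]; linarith, by simp [hm]; linarith⟩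
    have hIoo : ∀ u v : ℝ, u ∈ Set.Ioo a b → v ∈ Set.Ioo a b → f u ≤ 0 → 0 ≤ f v → False := by
      intro u v hu hv hfu hfv
      have h0 : (0 : ℝ) ∈ Set.uIcc (f u) (f v) := Set.mem_uIcc.2 (Or.inl ⟨hfu, hfv⟩)
      obtain ⟨c, hc, hfc⟩ := intermediate_value_uIcc (f := f) (a := u) (b := v)
        hf.continuousOn h0
      have hcI : c ∈ Set.Ioo a b := by
        have : Set.uIcc u v ⊆ Set.Ioo a b := by
          rw [Set.uIcc_eq_union]
          refine Set.union_subset ?_ ?_ <;> exact fun z hz =>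
            ⟨lt_of_lt_of_le (lt_min hu.1 hv.1) (by
                rcases hz with ⟨h1, h2⟩
                first
                | exact le_trans (min_le_left _ _) h1
                | exact le_trans (min_le_right _ _) h1),
             lt_of_le_of_lt (by
                rcases hz with ⟨h1, h2⟩
                first
                | exact le_trans h2 (le_max_right _ _)
                | exact le_trans h2 (le_max_left _ _)) (max_lt hu.2 hv.2)⟩
        exact this hc
      exact h c hcI hfc
    rcases (h m hmI).lt_or_gt with hneg | hpos
    · right
      have hIoo' : ∀ y ∈ Set.Ioo a b, f y ≤ 0 := by
        intro y hy
        by_contra hcon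
        exact hIoo m y hmI hy hneg.le (le_of_not_ge hcon)
      intro y hy
      have hcl : y ∈ closure (Set.Ioo a b) := by
        rw [closure_Ioo hab.ne]; exact hy
      have : closure (Set.Ioo a b) ⊆ {z | f z ≤ 0} :=
        closure_minimal hIoo' (isClosed_le hf continuous_const)
      exact this hcl
    · left
      have hIoo' : ∀ y ∈ Set.Ioo a b, 0 ≤ f y := by
        intro y hy
        by_contra hcon
        exact hIoo y m hy hmI (le_of_not_ge hcon) hpos.le
      intro y hy
      have hcl : y ∈ closure (Set.Ioo a b) := by
        rw [closure_Ioo hab.ne]; exact hy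
      have : closure (Set.Ioo a b) ⊆ {z | 0 ≤ f z} :=
        closure_minimal hIoo' (isClosed_le continuous_const hf)
      exact this hcl

/-- For real numbers `r ≤ s` and polynomials `p, q ∈ ℝ[X]`, there is a
(possibly empty) finite strictly increasing sequence `x₁ < ⋯ < x_n` of points of `[r,s]`
such that, with `x₀ = r` and `x_{n+1} = s`, on each interval `[x_i, x_{i+1]}` the
pointwise maximum of `p` and `q` agrees with a polynomial. -/
theorem max_of_polynomials_piecewise_polynomial
    (r s : ℝ) (hrs : r ≤ s) (p q : Polynomial ℝ) :
    ∃ (n : ℕ) (x : ℕ → ℝ),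
      x 0 = r ∧ x (n + 1) = s ∧
      (∀ i : ℕ, 1 ≤ i → i ≤ n → x i ∈ Set.Icc r s) ∧
      (∀ i j : ℕ, 1 ≤ i → i < j → j ≤ n → x i < x j) ∧
      (∀ i : ℕ, i ≤ n → x i ≤ x (i + 1)) ∧
      (∀ i : ℕ, i ≤ n → ∃ qi : Polynomial ℝ,
        ∀ y ∈ Set.Icc (x i) (x (i + 1)), max (p.eval y) (q.eval y) = qi.eval y) := by
  classical
  set d : Polynomial ℝ := p - q with hd
  set t : Finset ℝ := d.roots.toFinset.filter (fun c => r < c ∧ c < s) with ht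
  set L : List ℝ := t.sort (· ≤ ·) with hL
  set n : ℕ := L.length with hn
  -- elements of L lie in the open interval
  have hmemL : ∀ c ∈ L, r < c ∧ c < s := by
    intro c hc
    have : c ∈ t := (Finset.mem_sort _).1 hc
    exact (Finset.mem_filter.1 this).2
  have hsort : L.SortedLT := Finset.sortedLT_sort t
  have hgetmono : StrictMono L.get := hsort.strictMono_get
  -- the sequence of points
  set x : ℕ → ℝ := fun i =>
    if i = 0 then r else if h : i - 1 < n then L.get ⟨i - 1, h⟩ else s with hx
  have hx0 : x 0 = r := by simp [hx]
  have hxtop : x (n + 1) = s := by simp [hx]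
  have hxget : ∀ i : ℕ, 1 ≤ i → ∀ h : i - 1 < n, x i = L.get ⟨i - 1, h⟩ := by
    intro i hi h
    simp [hx, Nat.one_le_iff_ne_zero.1 hi, h]
  have hxmem : ∀ i : ℕ, 1 ≤ i → i ≤ n → x i ∈ Set.Ioo r s := by
    intro i hi hin
    have h1 : i - 1 < n := by omega
    rw [hxget i hi h1]
    exact Set.mem_Ioo.2 (hmemL _ (L.get_mem _))
  have hxstrict : ∀ i j : ℕ, 1 ≤ i → i < j → j ≤ n → x i < x j := by
    intro i j hi hij hjn
    have h1 : i - 1 < n := by omega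
    have h2 : j - 1 < n := by omega
    rw [hxget i hi h1, hxget j (by omega) h2]
    exact hgetmono (by simp [Fin.lt_def]; omega)
  have hxle : ∀ i j : ℕ, 1 ≤ i → i ≤ j → j ≤ n → x i ≤ x j := by
    intro i j hi hij hjn
    rcases eq_or_lt_of_le hij with h | h
    · rw [h]
    · exact (hxstrict i j hi h hjn).le
  have hrle : ∀ i : ℕ, i ≤ n + 1 → r ≤ x i := by
    intro i hi
    rcases Nat.eq_zero_or_pos i with h0 | h0
    · rw [h0, hx0]
    · rcases Nat.lt_or_ge i (n + 1) with h | h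
      · exact (hxmem i h0 (by omega)).1.le
      · have : i = n + 1 := by omega
        rw [this, hxtop]; exact hrs
  have hles : ∀ i : ℕ, i ≤ n + 1 → x i ≤ s := by
    intro i hi
    rcases Nat.eq_zero_or_pos i with h0 | h0
    · rw [h0, hx0]; exact hrs
    · rcases Nat.lt_or_ge i (n + 1) with h | h
      · exact (hxmem i h0 (by omega)).2.le
      · have : i = n + 1 := by omega
        rw [this, hxtop]
  have hmono : ∀ i : ℕ, i ≤ n → x i ≤ x (i + 1) := by
    intro i hin
    rcases Nat.eq_zero_or_pos i with h0 | h0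
    · rw [h0, hx0]; exact hrle 1 (by omega)
    · rcases Nat.lt_or_ge (i + 1) (n + 1) with h | h
      · exact hxle i (i + 1) h0 (by omega) (by omega)
      · have : i + 1 = n + 1 := by omega
        rw [this, hxtop]; exact hles i (by omega)
  refine ⟨n, x, hx0, hxtop, fun i hi hin => Set.mem_Icc.2
    ⟨(hxmem i hi hin).1.le, (hxmem i hi hin).2.le⟩, hxstrict, hmono, ?_⟩
  intro i hin
  by_cases hd0 : d = 0
  · refine ⟨p, fun y _ => ?_⟩
    have : p = q := by
      have := hd0
      rw [hd, sub_eq_zero] at this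
      exact this
    rw [this, max_self]
  -- d has no zero in the open subinterval
  have hnz : ∀ c ∈ Set.Ioo (x i) (x (i + 1)), d.eval c ≠ 0 := by
    intro c hc hceval
    have hcrs : r < c ∧ c < s := by
      constructor
      · exact lt_of_le_of_lt (hrle i (by omega)) hc.1
      · exact lt_of_lt_of_le hc.2 (hles (i + 1) (by omega))
    have hct : c ∈ t := Finset.mem_filter.2
      ⟨Multiset.mem_toFinset.2 ((Polynomial.mem_roots hd0).2 hceval), hcrs⟩
    have hcL : c ∈ L := (Finset.mem_sort _).2 hct
    obtain ⟨⟨j, hj⟩, hjc⟩ := List.mem_iff_get.1 hcL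
    have hxj : x (j + 1) = c := by
      rw [hxget (j + 1) (by omega) (by simpa using hj)]
      simpa using hjc
    rcases Nat.lt_or_ge (j + 1) (i + 1) with hlt | hge
    · have : x (j + 1) ≤ x i := hxle (j + 1) i (by omega) (by omega) hin
      rw [hxj] at this
      exact absurd hc.1 (not_lt.2 this)
    · have : x (i + 1) ≤ x (j + 1) := hxle (i + 1) (j + 1) (by omega) hge (by omega)
      rw [hxj] at this
      exact absurd hc.2 (not_lt.2 this)
  have hcont : Continuous fun y => d.eval y := d.continuous
  rcases aux_sign_const hcont (x i) (x (i + 1)) hnz with hpos | hneg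
  · refine ⟨p, fun y hy => ?_⟩
    have := hpos y hy
    rw [hd] at this
    simp only [Polynomial.eval_sub] at this
    exact max_eq_left (by linarith)
  · refine ⟨q, fun y hy => ?_⟩
    have := hneg y hy
    rw [hd] at this
    simp only [Polynomial.eval_sub] at this
    exact max_eq_right (by linarith)
end

section
/- Let X be a compact Hausdorff space and J ⊆ C(X,ℝ) a Riesz ideal. Then there exists a family (v_S), indexed by the finite subsets S of X ∖ Z(J), of elements of J such that for every finite S ⊆ X ∖ Z(J): 0 ≤ v_S(x) ≤ 1 for all x ∈ X, v_S(x) = 1 for every x ∈ S, and S ⊆ S' implies v_S ≤ v_{S'} pointwise. In particular, the net (v_S), directed by inclusion of index sets, converges pointwise to 1 on X ∖ Z(J). -/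
/-- Let `X` be a compact Hausdorff space and `J ⊆ C(X,ℝ)` a Riesz ideal
(a linear subspace that is solid for the pointwise order).  Then there is a family
`(v_S)` of elements of `J`, indexed by the finite subsets `S` of `X ∖ Z(J)`
(where `Z(J) = {x | a x = 0 for all a ∈ J}`), of `[0,1]`-valued functions with
`v_S = 1` on `S`, monotone in `S`; in particular the net `(v_S)` directed by inclusion
converges pointwise to `1` on `X ∖ Z(J)`. -/
theorem riesz_ideal_approximate_unit
    (X : Type*) [TopologicalSpace X] [CompactSpace X] [T2Space X]
    (J : Submodule ℝ C(X, ℝ))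
    (hsolid : ∀ a ∈ J, ∀ b : C(X, ℝ), (∀ x : X, |b x| ≤ |a x|) → b ∈ J) :
    ∃ v : Finset X → C(X, ℝ),
      (∀ S : Finset X, (∀ x ∈ S, ¬ (∀ a ∈ J, a x = 0)) →
        v S ∈ J ∧ (∀ x : X, v S x ∈ Set.Icc (0:ℝ) 1) ∧ (∀ x ∈ S, v S x = 1)) ∧
      (∀ S S' : Finset X, (∀ x ∈ S, ¬ (∀ a ∈ J, a x = 0)) →
        (∀ x ∈ S', ¬ (∀ a ∈ J, a x = 0)) → S ⊆ S' → ∀ x : X, v S x ≤ v S' x) ∧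
      (∀ x : X, ¬ (∀ a ∈ J, a x = 0) → ∀ ε : ℝ, 0 < ε →
        ∃ S : Finset X, (∀ y ∈ S, ¬ (∀ a ∈ J, a y = 0)) ∧
          ∀ S' : Finset X, (∀ y ∈ S', ¬ (∀ a ∈ J, a y = 0)) → S ⊆ S' →
            1 - v S' x < ε) := by
  classical
  -- for each x with a witness, pick a normalized nonnegative element of J equal to 1 at x
  set g : X → C(X, ℝ) := fun x =>
    if h : ∃ a ∈ J, a x ≠ 0 then (|h.choose x|)⁻¹ • |h.choose| else 0 with hg
  have hg_nonneg : ∀ x y, 0 ≤ g x y := by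
    intro x y
    simp only [hg]
    split
    · next h =>
      simp only [ContinuousMap.smul_apply, ContinuousMap.abs_apply, smul_eq_mul]
      positivity
    · simp
  have hg_mem : ∀ x, g x ∈ J := by
    intro x
    simp only [hg]
    split
    · next h =>
      obtain ⟨ha, hax⟩ := h.choose_spec
      refine hsolid ((|h.choose x|)⁻¹ • h.choose) (J.smul_mem _ ha) _ ?_
      intro y
      simp [abs_mul, abs_of_nonneg (abs_nonneg _), mul_comm]
    · exact J.zero_mem
  have hg_one : ∀ x, (∃ a ∈ J, a x ≠ 0) → g x x = 1 := by
    intro x h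
    simp only [hg, dif_pos h]
    obtain ⟨ha, hax⟩ := h.choose_spec
    simp only [ContinuousMap.smul_apply, ContinuousMap.abs_apply, smul_eq_mul]
    rw [inv_mul_cancel₀ (abs_ne_zero.mpr hax)]
  set v : Finset X → C(X, ℝ) := fun S => (∑ x ∈ S, g x) ⊓ 1 with hv
  have hsum_nonneg : ∀ (S : Finset X) (y : X), 0 ≤ (∑ x ∈ S, g x) y := by
    intro S y
    rw [ContinuousMap.coe_sum, Finset.sum_apply]
    exact Finset.sum_nonneg fun x _ => hg_nonneg x y
  have hv_apply : ∀ (S : Finset X) (y : X), v S y = min ((∑ x ∈ S, g x) y) 1 := by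
    intro S y; rfl
  refine ⟨v, ?_, ?_, ?_⟩
  · intro S hS
    refine ⟨?_, ?_, ?_⟩
    · refine hsolid (∑ x ∈ S, g x) (Submodule.sum_mem J fun x _ => hg_mem x) _ ?_
      intro y
      rw [abs_of_nonneg (hsum_nonneg S y), hv_apply,
        abs_of_nonneg (le_min (hsum_nonneg S y) zero_le_one)]
      exact min_le_left _ _
    · intro y
      rw [hv_apply]
      exact ⟨le_min (hsum_nonneg S y) zero_le_one, min_le_right _ _⟩
    · intro x hx
      rw [hv_apply]
      have h1 : (1:ℝ) ≤ (∑ y ∈ S, g y) x := by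
        rw [ContinuousMap.coe_sum, Finset.sum_apply]
        have : ∃ a ∈ J, a x ≠ 0 := by
          have := hS x hx; push_neg at this; exact this
        calc (1:ℝ) = g x x := (hg_one x this).symm
          _ ≤ ∑ y ∈ S, g y x :=
            Finset.single_le_sum (fun y _ => hg_nonneg y x) hx
      exact min_eq_right h1
  · intro S S' _ _ hSS' y
    rw [hv_apply, hv_apply]
    refine min_le_min ?_ le_rfl
    rw [ContinuousMap.coe_sum, Finset.sum_apply, ContinuousMap.coe_sum, Finset.sum_apply]
    exact Finset.sum_le_sum_of_subset_of_nonneg hSS' fun x _ _ => hg_nonneg x y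
  · intro x hx ε hε
    refine ⟨{x}, ?_, ?_⟩
    · intro y hy
      rw [Finset.mem_singleton] at hy
      subst hy; exact hx
    · intro S' hS' hsub
      have hxS' : x ∈ S' := hsub (Finset.mem_singleton_self x)
      have h1 : (1:ℝ) ≤ (∑ y ∈ S', g y) x := by
        rw [ContinuousMap.coe_sum, Finset.sum_apply]
        have hex : ∃ a ∈ J, a x ≠ 0 := by
          have := hS' x hxS'; push_neg at this; exact this
        calc (1:ℝ) = g x x := (hg_one x hex).symm
          _ ≤ ∑ y ∈ S', g y x :=
            Finset.single_le_sum (fun y _ => hg_nonneg y x) hxS'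
      rw [hv_apply, min_eq_right h1]
      simpa using hε
end

section
/- Let X be a compact Hausdorff space, Y ⊆ X a closed subset, and a ∈ C(X,ℝ) a function vanishing on Y. Let (v_i)_{i∈I} be a monotone net (indexed by a directed set I, with i ≤ j implying v_i ≤ v_j pointwise) of continuous functions X → [0,1] converging pointwise to 1 at every point of X ∖ Y, and set α = sup_{x∈X} a(x) + 1. Then the net of functions x ↦ min(α · v_i(x), a(x)) converges uniformly on X to a. -/
/-- Let `X` be compact Hausdorff, `Y ⊆ X` closed, and `a ∈ C(X,ℝ)` vanish
on `Y`.  Let `(v_i)` be a monotone net of continuous `[0,1]`-valued functions converging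
pointwise to `1` on `X ∖ Y`, and let `α = sup_x a(x) + 1`.  Then the net of functions
`x ↦ min (α · v_i x) (a x)` converges uniformly on `X` to `a`. -/
theorem min_scaled_approx_unit_tendstoUniformly
    (X : Type*) [TopologicalSpace X] [CompactSpace X] [T2Space X]
    (Y : Set X) (hY : IsClosed Y) (a : C(X, ℝ)) (ha : ∀ y ∈ Y, a y = 0)
    (ι : Type*) [Preorder ι] [IsDirected ι (· ≤ ·)] [Nonempty ι]
    (v : ι → C(X, ℝ))
    (hmono : ∀ i j : ι, i ≤ j → ∀ x : X, v i x ≤ v j x)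
    (hbound : ∀ (i : ι) (x : X), v i x ∈ Set.Icc (0:ℝ) 1)
    (hlim : ∀ x ∉ Y, Filter.Tendsto (fun i => v i x) Filter.atTop (nhds 1)) :
    TendstoUniformly (fun (i : ι) (x : X) => min (((⨆ z : X, a z) + 1) * v i x) (a x))
      (fun x => a x) Filter.atTop := by
  set α : ℝ := (⨆ z : X, a z) + 1 with hαdef
  rw [Metric.tendstoUniformly_iff]
  intro ε hε
  have hbdd : BddAbove (Set.range fun z : X => a z) := (isCompact_range a.continuous).bddAbove
  have hle : ∀ x : X, a x + 1 ≤ α := by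
    intro x
    have := le_ciSup hbdd x
    simp only [hαdef]
    linarith
  rcases lt_or_ge α 0 with hneg | hpos
  · refine Filter.Eventually.of_forall fun i x => ?_
    have h1 : α ≤ α * v i x := by nlinarith [(hbound i x).1, (hbound i x).2]
    have : min (α * v i x) (a x) = a x := min_eq_right (by linarith [hle x])
    rw [this, dist_self]
    exact hε
  · set W : ι → Set X := fun i => {z | a z - α * v i z < ε} with hW
    have hWopen : ∀ i, IsOpen (W i) := fun i =>
      isOpen_lt (by fun_prop) continuous_const
    have hcover : (Set.univ : Set X) ⊆ ⋃ i, W i := by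
      intro x _
      rcases lt_or_ge (a x) ε with hax | hax
      · obtain ⟨i⟩ := ‹Nonempty ι›
        refine Set.mem_iUnion.2 ⟨i, ?_⟩
        have h0 : 0 ≤ α * v i x := mul_nonneg hpos (hbound i x).1
        simp only [hW, Set.mem_setOf_eq]
        linarith
      · have hxY : x ∉ Y := fun hx => by have := ha x hx; linarith
        have hαpos : 0 < α := by linarith [hle x]
        have hdiv : a x / α < 1 := (div_lt_one hαpos).2 (by linarith [hle x])
        obtain ⟨i, hi⟩ := ((hlim x hxY).eventually (eventually_gt_nhds hdiv)).exists
        refine Set.mem_iUnion.2 ⟨i, ?_⟩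
        have : a x < α * v i x := by
          have := (div_lt_iff₀ hαpos).1 hi
          linarith [this]
        simp only [hW, Set.mem_setOf_eq]
        linarith
    obtain ⟨s, hs⟩ := isCompact_univ.elim_finite_subcover W hWopen hcover
    obtain ⟨M, hM⟩ := s.exists_le
    refine Filter.eventually_atTop.2 ⟨M, fun j hj x => ?_⟩
    obtain ⟨i, his, hxi⟩ := Set.mem_iUnion₂.1 (hs (Set.mem_univ x))
    have hij : i ≤ j := le_trans (hM i his) hj
    have hmono' : α * v i x ≤ α * v j x :=
      mul_le_mul_of_nonneg_left (hmono i j hij x) hpos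
    have hxi' : a x - α * v i x < ε := hxi
    have hlt : a x - α * v j x < ε := by linarith
    rw [Real.dist_eq, abs_of_nonneg (sub_nonneg.2 (min_le_right _ _))]
    have hmin := lt_min (show a x - ε < α * v j x by linarith)
      (show a x - ε < a x by linarith)
    linarith [hmin]
end

section
/- Let X be a compact Hausdorff space. (i) For every closed subset Y ⊆ X, Z(I(Y)) = Y. (ii) For every Riesz ideal J ⊆ C(X,ℝ) that is closed in the supremum norm, I(Z(J)) = J. Hence Z and I are mutually inverse bijections between the closed subsets of X and the norm-closed Riesz ideals of C(X,ℝ). -/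
/-- For a compact Hausdorff space `X`: (i) `Z(I(Y)) = Y` for every closed
`Y ⊆ X`; (ii) `I(Z(J)) = J` for every Riesz ideal `J ⊆ C(X,ℝ)` closed in the supremum
norm.  Hence `Z` and `I` are mutually inverse bijections between closed subsets of `X`
and norm-closed Riesz ideals of `C(X,ℝ)`. -/
theorem zero_set_ideal_galois_correspondence
    (X : Type*) [TopologicalSpace X] [CompactSpace X] [T2Space X] :
    (∀ Y : Set X, IsClosed Y →
      {x : X | ∀ a : C(X, ℝ), (∀ y ∈ Y, a y = 0) → a x = 0} = Y) ∧
    (∀ J : Submodule ℝ C(X, ℝ),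
      (∀ a ∈ J, ∀ b : C(X, ℝ), (∀ x : X, |b x| ≤ |a x|) → b ∈ J) →
      IsClosed (J : Set C(X, ℝ)) →
      {a : C(X, ℝ) | ∀ x : X, (∀ c ∈ J, c x = 0) → a x = 0} = (J : Set C(X, ℝ))) := by
  constructor
  · intro Y hY
    ext x
    simp only [Set.mem_setOf_eq]
    constructor
    · intro hx
      by_contra hxY
      obtain ⟨f, hf0, hf1, -⟩ := exists_continuous_zero_one_of_isClosed hY
        (isClosed_singleton (x := x)) (Set.disjoint_singleton_right.mpr hxY)
      have h := hx f (fun y hy => by simpa using hf0 hy)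
      have h1 : f x = 1 := by simpa using hf1 rfl
      rw [h1] at h
      norm_num at h
    · intro hx a ha
      exact ha x hx
  · intro J hRiesz hJc
    ext a
    simp only [Set.mem_setOf_eq, SetLike.mem_coe]
    constructor
    · intro ha
      have key : ∀ ε : ℝ, 0 < ε → ∃ b ∈ J, ‖a - b‖ ≤ ε := by
        intro ε hε
        set K : Set X := {x | ε ≤ |a x|} with hKdef
        have hKclosed : IsClosed K := isClosed_le continuous_const a.continuous.abs
        have hKcomp : IsCompact K := hKclosed.isCompact
        rcases K.eq_empty_or_nonempty with hKe | hKne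
        · refine ⟨0, J.zero_mem, ?_⟩
          rw [sub_zero]
          refine (ContinuousMap.norm_le a hε.le).mpr fun x => ?_
          have hx : x ∉ K := by simp [hKe]
          have : ¬ ε ≤ |a x| := by simpa [hKdef] using hx
          simpa [Real.norm_eq_abs] using le_of_not_ge this
        · -- cover K by non-vanishing sets of elements of J
          have hcover : K ⊆ ⋃ c : J, ((c : C(X, ℝ)) ⁻¹' ({0}ᶜ) : Set X) := by
            intro x hxK
            by_contra hxn
            simp only [Set.mem_iUnion, Set.mem_preimage, Set.mem_compl_iff,
              Set.mem_singleton_iff, not_exists, not_not] at hxn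
            have hax : a x = 0 := ha x (fun c hc => hxn ⟨c, hc⟩)
            have hxK' : ε ≤ |a x| := hxK
            rw [hax] at hxK'
            simp at hxK'
            linarith
          obtain ⟨s, hs⟩ := hKcomp.elim_finite_subcover _
            (fun c : J => (isOpen_compl_singleton).preimage (c : C(X, ℝ)).continuous) hcover
          set g : C(X, ℝ) := ∑ c ∈ s, (c : C(X, ℝ)) * (c : C(X, ℝ)) with hgdef
          have hgx : ∀ x, g x = ∑ c ∈ s, ((c : C(X, ℝ)) x) * ((c : C(X, ℝ)) x) := by
            intro x; simp [hgdef]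
          have hg0 : ∀ x, 0 ≤ g x := fun x => by
            rw [hgx]; exact Finset.sum_nonneg fun c _ => mul_self_nonneg _
          have hgJ : g ∈ J := by
            refine Submodule.sum_mem J fun c _ => ?_
            refine hRiesz (‖(c : C(X, ℝ))‖ • (c : C(X, ℝ))) (J.smul_mem _ c.2) _ fun x => ?_
            have h1 : |(c : C(X, ℝ)) x| ≤ ‖(c : C(X, ℝ))‖ := by
              simpa [Real.norm_eq_abs] using (c : C(X, ℝ)).norm_coe_le_norm x
            have h2 : (0 : ℝ) ≤ |(c : C(X, ℝ)) x| := abs_nonneg _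
            simp only [ContinuousMap.mul_apply, ContinuousMap.smul_apply, smul_eq_mul,
              abs_mul, abs_norm]
            exact mul_le_mul_of_nonneg_right h1 h2
          have hgK : ∀ x ∈ K, 0 < g x := by
            intro x hxK
            have hx' := hs hxK
            simp only [Set.mem_iUnion, Set.mem_preimage, Set.mem_compl_iff,
              Set.mem_singleton_iff] at hx'
            obtain ⟨c, hcs, hcx⟩ := hx'
            rw [hgx]
            exact Finset.sum_pos' (fun d _ => mul_self_nonneg _)
              ⟨c, hcs, mul_self_pos.mpr hcx⟩
          obtain ⟨x₀, hx₀K, hmin⟩ := hKcomp.exists_isMinOn hKne g.continuous.continuousOn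
          set δ := g x₀ with hδdef
          have hδ : 0 < δ := hgK x₀ hx₀K
          have hminK : ∀ x ∈ K, δ ≤ g x := fun x hx => hmin hx
          obtain ⟨x₁, hx₁⟩ := hKne
          have hna : 0 < ‖a‖ := by
            have h1 : ε ≤ |a x₁| := hx₁
            have h2 : |a x₁| ≤ ‖a‖ := by
              simpa [Real.norm_eq_abs] using a.norm_coe_le_norm x₁
            linarith
          set t : ℝ := ‖a‖ / (ε * δ) with htdef
          have ht : 0 < t := div_pos hna (mul_pos hε hδ)
          have hden : ∀ x, 0 < 1 + t * g x := fun x => by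
            have := mul_nonneg ht.le (hg0 x); linarith
          have hbcont : Continuous fun x => a x * (t * g x) / (1 + t * g x) :=
            (a.continuous.mul (continuous_const.mul g.continuous)).div
              (continuous_const.add (continuous_const.mul g.continuous))
              fun x => (hden x).ne'
          set b : C(X, ℝ) := ⟨_, hbcont⟩ with hbdef
          have hbx : ∀ x, b x = a x * (t * g x) / (1 + t * g x) := fun x => rfl
          have hbJ : b ∈ J := by
            refine hRiesz ((t * ‖a‖) • g) (J.smul_mem _ hgJ) b fun x => ?_
            have h1 : |a x| ≤ ‖a‖ := by
              simpa [Real.norm_eq_abs] using a.norm_coe_le_norm x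
            have h2 : (0 : ℝ) ≤ t * g x := mul_nonneg ht.le (hg0 x)
            have h3 := hden x
            rw [hbx]
            simp only [ContinuousMap.smul_apply, smul_eq_mul]
            rw [abs_div, abs_mul, abs_of_nonneg h2, abs_of_nonneg h3.le,
              abs_of_nonneg (mul_nonneg (mul_nonneg ht.le (norm_nonneg a)) (hg0 x)),
              div_le_iff₀ h3]
            nlinarith [mul_le_mul_of_nonneg_right h1 h2, mul_nonneg
              (mul_nonneg (mul_nonneg ht.le (norm_nonneg a)) (hg0 x)) h2]
          refine ⟨b, hbJ, ?_⟩
          refine (ContinuousMap.norm_le _ hε.le).mpr fun x => ?_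
          have hsub : (a - b) x = a x / (1 + t * g x) := by
            rw [ContinuousMap.sub_apply, hbx]
            field_simp [(hden x).ne']
            ring
          rw [hsub, Real.norm_eq_abs, abs_div, abs_of_nonneg (hden x).le,
            div_le_iff₀ (hden x)]
          have htεδ : t * (ε * δ) = ‖a‖ := div_mul_cancel₀ _ (mul_pos hε hδ).ne'
          rcases le_or_gt ε |a x| with hxK | hxK
          · have h1 : δ ≤ g x := hminK x hxK
            have h2 : |a x| ≤ ‖a‖ := by
              have := a.norm_coe_le_norm x; rwa [Real.norm_eq_abs] at this
            nlinarith [mul_le_mul_of_nonneg_left h1 (mul_nonneg hε.le ht.le)]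
          · nlinarith [mul_nonneg hε.le (mul_nonneg ht.le (hg0 x))]
      have hcl : a ∈ closure (J : Set C(X, ℝ)) := by
        rw [Metric.mem_closure_iff]
        intro ε hε
        obtain ⟨b, hbJ, hb⟩ := key (ε / 2) (by linarith)
        exact ⟨b, hbJ, by rw [dist_eq_norm]; linarith⟩
      rwa [hJc.closure_eq] at hcl
    · intro ha x hx
      exact hx a ha
end

section
/- Let X be a compact Hausdorff space and J ⊆ C(X,ℝ) a Riesz ideal that is closed in the supremum norm, and let Y = Z(J) (a closed subset of X). Then the restriction map φ : C(X,ℝ) → C(Y,ℝ), φ(a) = a|_Y, is a surjective Riesz homomorphism satisfying φ(1) = 1, whose kernel is exactly J. -/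
/-- Let `X` be compact Hausdorff and `J ⊆ C(X,ℝ)` a norm-closed Riesz
ideal, and let `Y = Z(J)`.  Then the restriction map `φ : C(X,ℝ) → C(Y,ℝ)` is a
surjective Riesz homomorphism with `φ 1 = 1` whose kernel is exactly `J`. -/
theorem restriction_to_zero_set_surjective_riesz_hom
    (X : Type*) [TopologicalSpace X] [CompactSpace X] [T2Space X]
    (J : Submodule ℝ C(X, ℝ))
    (hsolid : ∀ a ∈ J, ∀ b : C(X, ℝ), (∀ x : X, |b x| ≤ |a x|) → b ∈ J)
    (hclosed : IsClosed (J : Set C(X, ℝ)))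
    (Y : Set X) (hY : Y = {x : X | ∀ a ∈ J, a x = 0}) :
    Function.Surjective (fun a : C(X, ℝ) => a.restrict Y) ∧
    (∀ a b : C(X, ℝ), (a + b).restrict Y = a.restrict Y + b.restrict Y) ∧
    (∀ (r : ℝ) (a : C(X, ℝ)), (r • a).restrict Y = r • a.restrict Y) ∧
    (∀ a b : C(X, ℝ), (a ⊔ b).restrict Y = a.restrict Y ⊔ b.restrict Y) ∧
    ((1 : C(X, ℝ)).restrict Y = 1) ∧
    (∀ a : C(X, ℝ), a.restrict Y = 0 ↔ a ∈ J) := by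
  have hYclosed : IsClosed Y := by
    have : Y = ⋂ a ∈ (J : Set C(X, ℝ)), {x | a x = 0} := by
      rw [hY]; ext x; simp
    rw [this]
    exact isClosed_biInter fun a _ => isClosed_eq a.continuous continuous_const
  refine ⟨?_, ?_, ?_, ?_, ?_, ?_⟩
  · intro f; exact ContinuousMap.exists_restrict_eq hYclosed f
  · intro a b; rfl
  · intro r a; rfl
  · intro a b; ext x; rfl
  · rfl
  · intro a
    constructor
    · intro h
      have hz : ∀ x ∈ Y, a x = 0 := fun x hx => ContinuousMap.congr_fun h ⟨x, hx⟩
      have key : ∀ ε > (0 : ℝ), ∃ d ∈ J, ‖a - d‖ ≤ ε := by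
        intro ε hε
        set K : Set X := {x | ε ≤ |a x|} with hK
        have hKcl : IsClosed K := isClosed_le continuous_const a.continuous.abs
        have hKc : IsCompact K := hKcl.isCompact
        rcases K.eq_empty_or_nonempty with hKe | hKne
        · refine ⟨0, J.zero_mem, ?_⟩
          rw [sub_zero]
          refine (ContinuousMap.norm_le a hε.le).mpr fun y => ?_
          by_contra hcon
          push_neg at hcon
          exact (Set.eq_empty_iff_forall_notMem.mp hKe y) (le_of_lt hcon)
        · have hcov : ∀ x : K, ∃ b ∈ J, b (x : X) ≠ 0 := by
            rintro ⟨x, hx⟩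
            by_contra hcon
            push_neg at hcon
            have hxY : x ∈ Y := by rw [hY]; exact fun b hb => hcon b hb
            have : a x = 0 := hz x hxY
            have : ε ≤ |a x| := hx
            simp_all
            linarith
          choose b hbJ hbx using hcov
          have hcov' : K ⊆ ⋃ x : K, {y | b x y ≠ 0} := by
            intro y hy
            exact Set.mem_iUnion.mpr ⟨⟨y, hy⟩, hbx ⟨y, hy⟩⟩
          obtain ⟨T, hT⟩ := hKc.elim_finite_subcover (fun x : K => {y | b x y ≠ 0})
            (fun x => isOpen_ne.preimage (b x).continuous) hcov'
          set c : C(X, ℝ) := ∑ x ∈ T, b x * b x with hc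
          have hcJ : c ∈ J := by
            refine Submodule.sum_mem J fun x _ => ?_
            refine hsolid (‖b x‖ • b x) (J.smul_mem _ (hbJ x)) _ fun y => ?_
            have h1 : |b x y| ≤ ‖b x‖ := (b x).norm_coe_le_norm y
            have h2 : (0:ℝ) ≤ |b x y| := abs_nonneg _
            simp only [ContinuousMap.mul_apply, ContinuousMap.smul_apply, smul_eq_mul,
              abs_mul]
            calc |b x y| * |b x y| ≤ ‖b x‖ * |b x y| := mul_le_mul_of_nonneg_right h1 h2
              _ = |‖b x‖| * |b x y| := by rw [abs_norm]
          have hcnn : ∀ y, 0 ≤ c y := by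
            intro y
            rw [hc]
            simp only [ContinuousMap.coe_sum, Finset.sum_apply, ContinuousMap.mul_apply]
            exact Finset.sum_nonneg fun x _ => mul_self_nonneg _
          have hcpos : ∀ y ∈ K, 0 < c y := by
            intro y hy
            obtain ⟨x, hxT, hx⟩ := Set.mem_iUnion₂.mp (hT hy)
            have h1 : 0 < b x y * b x y := mul_self_pos.mpr hx
            have h2 : b x y * b x y ≤ c y := by
              rw [hc]
              simp only [ContinuousMap.coe_sum, Finset.sum_apply, ContinuousMap.mul_apply]
              exact Finset.single_le_sum (fun i _ => mul_self_nonneg ((b i) y)) hxT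
            linarith
          obtain ⟨x₀, hx₀K, hx₀⟩ := hKc.exists_isMinOn hKne c.continuous.continuousOn
          set δ := c x₀ with hδ
          have hδpos : 0 < δ := hcpos x₀ hx₀K
          set t : ℝ := ‖a‖ / (ε * δ) with ht
          have htnn : 0 ≤ t := div_nonneg (norm_nonneg _) (mul_nonneg hε.le hδpos.le)
          have hbound : ‖a‖ ≤ ε * (1 + t * δ) := by
            rw [ht, mul_add, mul_one, mul_comm, mul_assoc, div_mul_eq_mul_div,
              mul_comm δ ε, mul_div_assoc]
            rw [div_self (by positivity), mul_one]
            linarith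
          have hden : ∀ y, 0 < 1 + t * c y := fun y => by
            have := mul_nonneg htnn (hcnn y); linarith
          set d : C(X, ℝ) := ⟨fun y => a y * (t * c y / (1 + t * c y)), by
            apply a.continuous.mul
            exact ((continuous_const.mul c.continuous).div
              (continuous_const.add (continuous_const.mul c.continuous))
              fun y => (hden y).ne')⟩ with hd
          have hq : ∀ y, 0 ≤ t * c y / (1 + t * c y) ∧ t * c y / (1 + t * c y) ≤ t * c y := by
            intro y
            have h1 : 0 ≤ t * c y := mul_nonneg htnn (hcnn y)
            constructor
            · exact div_nonneg h1 (hden y).le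
            · exact div_le_self h1 (by linarith [mul_nonneg htnn (hcnn y)])
          have hdJ : d ∈ J := by
            refine hsolid ((t * ‖a‖) • c) (J.smul_mem _ hcJ) _ fun y => ?_
            have hay : |a y| ≤ ‖a‖ := a.norm_coe_le_norm y
            obtain ⟨hq0, hq1⟩ := hq y
            simp only [hd, ContinuousMap.coe_mk, ContinuousMap.smul_apply, smul_eq_mul]
            rw [abs_mul, abs_of_nonneg hq0,
              abs_of_nonneg (mul_nonneg (mul_nonneg htnn (norm_nonneg _)) (hcnn y))]
            calc |a y| * (t * c y / (1 + t * c y)) ≤ ‖a‖ * (t * c y) :=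
                  mul_le_mul hay hq1 hq0 (norm_nonneg _)
              _ = t * ‖a‖ * c y := by ring
          refine ⟨d, hdJ, ?_⟩
          refine (ContinuousMap.norm_le _ hε.le).mpr fun y => ?_
          have halg : ∀ u s : ℝ, (0:ℝ) < 1 + s → u - u * (s / (1 + s)) = u / (1 + s) := by
            intro u s hs
            field_simp
            ring
          have hval : a y - d y = a y / (1 + t * c y) := by
            simp only [hd, ContinuousMap.coe_mk]
            exact halg (a y) (t * c y) (hden y)
          rw [ContinuousMap.sub_apply, hval, Real.norm_eq_abs, abs_div, abs_of_pos (hden y)]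
          by_cases hyK : y ∈ K
          · have h1 : δ ≤ c y := hx₀ hyK
            have hpos : (0:ℝ) < 1 + t * δ := by nlinarith
            have h2 : 1 + t * δ ≤ 1 + t * c y := by nlinarith
            have hay : |a y| ≤ ‖a‖ := a.norm_coe_le_norm y
            calc |a y| / (1 + t * c y) ≤ ‖a‖ / (1 + t * δ) :=
                  div_le_div₀ (norm_nonneg _) hay hpos h2
              _ ≤ ε := by
                  rw [div_le_iff₀ hpos]
                  linarith [hbound]
          · have hay : |a y| ≤ ε := by
              by_contra hcon; push_neg at hcon; exact hyK hcon.le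
            calc |a y| / (1 + t * c y) ≤ |a y| :=
                  div_le_self (abs_nonneg _) (by linarith [mul_nonneg htnn (hcnn y)])
              _ ≤ ε := hay
      have hcl : a ∈ closure (J : Set C(X, ℝ)) := by
        rw [Metric.mem_closure_iff]
        intro ε hε
        obtain ⟨d, hdJ, hd⟩ := key (ε / 2) (by linarith)
        exact ⟨d, hdJ, by rw [dist_eq_norm]; linarith⟩
      rwa [hclosed.closure_eq] at hcl
    · intro ha
      ext ⟨x, hx⟩
      have hx' : x ∈ {x : X | ∀ b ∈ J, b x = 0} := by rw [← hY]; exact hx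
      have : a x = 0 := hx' a ha
      simpa [ContinuousMap.restrict] using this
end
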